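/- arXiv:2405.11681 — 2 statements merged into one kernel-verified Lean document; each statement's English description precedes it below -/
import Mathlib

section
/- Let U, Û ∈ ℝ^{p×r} have orthonormal columns, and let U^T Û = A S B^T be a singular value decomposition with A, B ∈ ℝ^{r×r} orthogonal. Then ‖Û B A^T − U‖₂ ≤ √2 · √(1 − λ_min²(U^T Û)) ≤ √2 ‖ÛÛ^T − UU^T‖₂. -/
open Matrix

noncomputable def opNorm {m n : Type*} [Fintype m] [Fintype n] [DecidableEq n]
    (M : Matrix m n ℝ) : ℝ :=
  ‖LinearMap.toContinuousLinearMap (Matrix.toEuclideanLin M)‖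

def frobSq {m n : Type*} [Fintype m] [Fintype n] (M : Matrix m n ℝ) : ℝ :=
  ∑ i, ∑ j, (M i j) ^ 2

/-! Put V = U A and W = Û B: both have orthonormal columns and Vᵀ W = S. Since
Û B Aᵀ − U = (W − V) Aᵀ, its squared norm at x is 2‖x‖² − 2 yᵀ S y with y = Aᵀ x, which is at most
2 (1 − s) ‖x‖² ≤ 2 (1 − s²) ‖x‖² for the smallest diagonal entry s ∈ [0, 1] of S.
For the second bound, z = Û B eᵢ (with S i i = s) is a unit vector in the range of Û and
Uᵀ z = s A eᵢ, so (ÛÛᵀ − UUᵀ) z = z − U Uᵀ z has squared norm 1 − s². -/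

section DotProduct

variable {m n k : Type*} [Fintype m] [Fintype n] [Fintype k]

lemma dotProduct_self_nonneg (x : n → ℝ) : 0 ≤ x ⬝ᵥ x :=
  Fintype.sum_nonneg fun i => mul_self_nonneg (x i)

lemma mulVec_dotProduct_mulVec (M : Matrix m n ℝ) (N : Matrix m k ℝ) (x : n → ℝ) (y : k → ℝ) :
    (M *ᵥ x) ⬝ᵥ (N *ᵥ y) = x ⬝ᵥ ((Mᵀ * N) *ᵥ y) := by
  rw [← mulVec_mulVec, mulVec_transpose, dotProduct_comm x, ← dotProduct_mulVec, dotProduct_comm]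

lemma mulVec_dotProduct_mulVec_of_transpose_mul_self [DecidableEq n] {M : Matrix m n ℝ}
    (hM : Mᵀ * M = 1) (x y : n → ℝ) : (M *ᵥ x) ⬝ᵥ (M *ᵥ y) = x ⬝ᵥ y := by
  rw [mulVec_dotProduct_mulVec, hM, one_mulVec]

lemma sub_mulVec_dotProduct_self [DecidableEq n] {M N : Matrix m n ℝ} (hM : Mᵀ * M = 1)
    (hN : Nᵀ * N = 1) (x : n → ℝ) :
    ((M - N) *ᵥ x) ⬝ᵥ ((M - N) *ᵥ x) = 2 * (x ⬝ᵥ x) - 2 * (x ⬝ᵥ ((Nᵀ * M) *ᵥ x)) := by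
  rw [sub_mulVec, sub_dotProduct, dotProduct_sub, dotProduct_sub, dotProduct_comm (M *ᵥ x) (N *ᵥ x),
    mulVec_dotProduct_mulVec_of_transpose_mul_self hM,
    mulVec_dotProduct_mulVec_of_transpose_mul_self hN, mulVec_dotProduct_mulVec]
  ring

lemma projection_sub_mulVec_dotProduct_self [DecidableEq n] [DecidableEq k] {U : Matrix m k ℝ}
    {V : Matrix m n ℝ} (hU : Uᵀ * U = 1) (hV : Vᵀ * V = 1) (y : n → ℝ) :
    ((V * Vᵀ - U * Uᵀ) *ᵥ (V *ᵥ y)) ⬝ᵥ ((V * Vᵀ - U * Uᵀ) *ᵥ (V *ᵥ y))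
      = y ⬝ᵥ y - ((Uᵀ * V) *ᵥ y) ⬝ᵥ ((Uᵀ * V) *ᵥ y) := by
  have hproj : (V * Vᵀ - U * Uᵀ) *ᵥ (V *ᵥ y) = V *ᵥ y - U *ᵥ ((Uᵀ * V) *ᵥ y) := by
    rw [sub_mulVec, mulVec_mulVec, mulVec_mulVec, mulVec_mulVec, Matrix.mul_assoc, hV,
      Matrix.mul_one, Matrix.mul_assoc]
  rw [hproj, sub_dotProduct, dotProduct_sub, dotProduct_sub, dotProduct_comm (V *ᵥ y) (U *ᵥ _),
    mulVec_dotProduct_mulVec_of_transpose_mul_self hV,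
    mulVec_dotProduct_mulVec_of_transpose_mul_self hU, mulVec_dotProduct_mulVec U V]
  ring

end DotProduct

section Diagonal

variable {n : Type*} [Fintype n] [DecidableEq n] {S : Matrix n n ℝ}

lemma Matrix.IsDiag.mulVec_single_one (hS : S.IsDiag) (i : n) :
    S *ᵥ Pi.single i 1 = S i i • Pi.single i 1 := by
  conv_lhs => rw [← hS.diagonal_diag]
  rw [diagonal_mulVec_single, diag_apply, mul_one, ← Pi.single_smul', smul_eq_mul, mul_one]

lemma Matrix.IsDiag.mul_dotProduct_self_le (hS : S.IsDiag) {s : ℝ} (hs : ∀ i, s ≤ S i i)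
    (y : n → ℝ) : s * (y ⬝ᵥ y) ≤ y ⬝ᵥ (S *ᵥ y) := by
  rw [← hS.diagonal_diag, dotProduct, dotProduct, Finset.mul_sum]
  refine Finset.sum_le_sum fun i _ => ?_
  rw [mulVec_diagonal, diag_apply]
  nlinarith [mul_le_mul_of_nonneg_right (hs i) (mul_self_nonneg (y i))]

end Diagonal

section OpNorm

variable {m n : Type*} [Fintype m] [Fintype n]

lemma norm_toLp_sq (x : n → ℝ) : ‖WithLp.toLp 2 x‖ ^ 2 = x ⬝ᵥ x := by
  rw [← real_inner_self_eq_norm_sq, EuclideanSpace.inner_toLp_toLp, star_trivial]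

variable [DecidableEq n]

lemma mulVec_dotProduct_self_le_opNorm_sq (M : Matrix m n ℝ) (x : n → ℝ) :
    (M *ᵥ x) ⬝ᵥ (M *ᵥ x) ≤ opNorm M ^ 2 * (x ⬝ᵥ x) := by
  rw [← norm_toLp_sq, ← norm_toLp_sq, ← mul_pow]
  exact pow_le_pow_left₀ (norm_nonneg _)
    ((LinearMap.toContinuousLinearMap (toEuclideanLin M)).le_opNorm (WithLp.toLp 2 x)) 2

lemma opNorm_le_of_mulVec_dotProduct_self_le (M : Matrix m n ℝ) {c : ℝ} (hc : 0 ≤ c)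
    (h : ∀ x, (M *ᵥ x) ⬝ᵥ (M *ᵥ x) ≤ c ^ 2 * (x ⬝ᵥ x)) : opNorm M ≤ c := by
  refine ContinuousLinearMap.opNorm_le_bound _ hc fun x => ?_
  rw [← pow_le_pow_iff_left₀ (norm_nonneg _) (by positivity) two_ne_zero, mul_pow]
  have := h x.ofLp
  rwa [← norm_toLp_sq, ← norm_toLp_sq] at this

end OpNorm

section Procrustes

variable {p r : Type*} [Fintype p] [Fintype r] [DecidableEq r]
  {U Uhat : Matrix p r ℝ} {A S B : Matrix r r ℝ}

lemma procrustes_sub_mulVec_dotProduct_self_le (hU : Uᵀ * U = 1) (hUhat : Uhatᵀ * Uhat = 1)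
    (hA' : A * Aᵀ = 1) (hB : Bᵀ * B = 1) (hS : S.IsDiag) (hsvd : Uᵀ * Uhat = A * S * Bᵀ) {s : ℝ}
    (hs : ∀ i, s ≤ S i i) (x : r → ℝ) :
    ((Uhat * B * Aᵀ - U) *ᵥ x) ⬝ᵥ ((Uhat * B * Aᵀ - U) *ᵥ x) ≤ 2 * (1 - s) * (x ⬝ᵥ x) := by
  have hiso : (Uhat * B * Aᵀ)ᵀ * (Uhat * B * Aᵀ) = 1 := by
    simp only [transpose_mul, transpose_transpose, Matrix.mul_assoc]
    rw [← Matrix.mul_assoc Uhatᵀ, hUhat, Matrix.one_mul, ← Matrix.mul_assoc Bᵀ, hB,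
      Matrix.one_mul, hA']
  have hcross : Uᵀ * (Uhat * B * Aᵀ) = A * S * Aᵀ := by
    rw [← Matrix.mul_assoc, ← Matrix.mul_assoc, hsvd, Matrix.mul_assoc _ Bᵀ, hB, Matrix.mul_one]
  have hAx : (Aᵀ *ᵥ x) ⬝ᵥ (Aᵀ *ᵥ x) = x ⬝ᵥ x := by
    rw [mulVec_dotProduct_mulVec_of_transpose_mul_self (by rwa [transpose_transpose])]
  have hquad : x ⬝ᵥ ((A * S * Aᵀ) *ᵥ x) = (Aᵀ *ᵥ x) ⬝ᵥ (S *ᵥ (Aᵀ *ᵥ x)) := by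
    rw [← mulVec_mulVec, ← mulVec_mulVec, dotProduct_mulVec, ← mulVec_transpose]
  have hdiag := hS.mul_dotProduct_self_le hs (Aᵀ *ᵥ x)
  rw [hAx] at hdiag
  rw [sub_mulVec_dotProduct_self hiso hU, hcross, hquad]
  linarith

lemma projection_sub_mulVec_singular_vector_dotProduct_self (hU : Uᵀ * U = 1)
    (hUhat : Uhatᵀ * Uhat = 1) (hA : Aᵀ * A = 1) (hB : Bᵀ * B = 1) (hS : S.IsDiag)
    (hsvd : Uᵀ * Uhat = A * S * Bᵀ) (i : r) :
    ((Uhat * Uhatᵀ - U * Uᵀ) *ᵥ (Uhat *ᵥ (B *ᵥ Pi.single i 1)))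
      ⬝ᵥ ((Uhat * Uhatᵀ - U * Uᵀ) *ᵥ (Uhat *ᵥ (B *ᵥ Pi.single i 1))) = 1 - S i i ^ 2 := by
  have hcos : (Uᵀ * Uhat) *ᵥ (B *ᵥ Pi.single i 1) = S i i • (A *ᵥ Pi.single i 1) := by
    rw [hsvd, mulVec_mulVec, Matrix.mul_assoc _ Bᵀ, hB, Matrix.mul_one, ← mulVec_mulVec,
      hS.mulVec_single_one, mulVec_smul]
  rw [projection_sub_mulVec_dotProduct_self hU hUhat, hcos, smul_dotProduct, dotProduct_smul,
    mulVec_dotProduct_mulVec_of_transpose_mul_self hA,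
    mulVec_dotProduct_mulVec_of_transpose_mul_self hB, single_one_dotProduct, Pi.single_eq_same]
  simp only [smul_eq_mul]
  ring

end Procrustes

theorem procrustes_alignment_bound_general {p r : ℕ} (hr : 0 < r)
    (U Uhat : Matrix (Fin p) (Fin r) ℝ) (A S B : Matrix (Fin r) (Fin r) ℝ)
    (hU : Uᵀ * U = 1) (hUhat : Uhatᵀ * Uhat = 1)
    (hA : Aᵀ * A = 1) (hA' : A * Aᵀ = 1)
    (hB : Bᵀ * B = 1)
    (hS : S.IsDiag) (hSnn : ∀ i, 0 ≤ S i i)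
    (hsvd : Uᵀ * Uhat = A * S * Bᵀ) :
    opNorm (Uhat * B * Aᵀ - U) ≤ Real.sqrt 2 * Real.sqrt (1 - (⨅ i, S i i) ^ 2)
    ∧ Real.sqrt 2 * Real.sqrt (1 - (⨅ i, S i i) ^ 2)
        ≤ Real.sqrt 2 * opNorm (Uhat * Uhatᵀ - U * Uᵀ) := by
  have : Nonempty (Fin r) := ⟨⟨0, hr⟩⟩
  obtain ⟨i₀, hi₀⟩ := Finite.exists_min fun i => S i i
  have hinf : ⨅ i, S i i = S i₀ i₀ :=
    le_antisymm (ciInf_le (Set.finite_range _).bddBelow i₀) (le_ciInf hi₀)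
  rw [hinf]
  have hgap := projection_sub_mulVec_singular_vector_dotProduct_self hU hUhat hA hB hS hsvd i₀
  have hgap_nonneg : 0 ≤ 1 - S i₀ i₀ ^ 2 := hgap ▸ dotProduct_self_nonneg _
  refine ⟨opNorm_le_of_mulVec_dotProduct_self_le _ (by positivity) fun x => ?_, ?_⟩
  · rw [mul_pow, Real.sq_sqrt zero_le_two, Real.sq_sqrt hgap_nonneg]
    have hle1 : S i₀ i₀ ≤ 1 := by nlinarith [hSnn i₀]
    have := procrustes_sub_mulVec_dotProduct_self_le hU hUhat hA' hB hS hsvd hi₀ x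
    nlinarith [mul_nonneg (mul_nonneg (hSnn i₀) (sub_nonneg.2 hle1)) (dotProduct_self_nonneg x)]
  · refine mul_le_mul_of_nonneg_left ((Real.sqrt_le_left (norm_nonneg _)).2 ?_) (Real.sqrt_nonneg 2)
    have hunit : (Uhat *ᵥ (B *ᵥ Pi.single i₀ 1)) ⬝ᵥ (Uhat *ᵥ (B *ᵥ Pi.single i₀ 1)) = 1 := by
      rw [mulVec_dotProduct_mulVec_of_transpose_mul_self hUhat,
        mulVec_dotProduct_mulVec_of_transpose_mul_self hB, single_one_dotProduct, Pi.single_eq_same]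
    have h := mulVec_dotProduct_self_le_opNorm_sq (Uhat * Uhatᵀ - U * Uᵀ)
      (Uhat *ᵥ (B *ᵥ Pi.single i₀ 1))
    rwa [hgap, hunit, mul_one] at h

/-- Procrustes alignment bound: if Uᵀ Û = A S Bᵀ is an SVD (A, B orthogonal, S diagonal
with nonnegative entries), then ‖Û B Aᵀ − U‖₂ ≤ √2 √(1 − λ_min²(Uᵀ Û)) ≤ √2 ‖ÛÛᵀ − UUᵀ‖₂,
where λ_min(Uᵀ Û) is the smallest singular value, i.e. the smallest diagonal entry of S. -/
theorem procrustes_alignment_bound {p r : ℕ} (hr : 0 < r)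
    (U Uhat : Matrix (Fin p) (Fin r) ℝ) (A S B : Matrix (Fin r) (Fin r) ℝ)
    (hU : Uᵀ * U = 1) (hUhat : Uhatᵀ * Uhat = 1)
    (hA : Aᵀ * A = 1) (hA' : A * Aᵀ = 1)
    (hB : Bᵀ * B = 1) (hB' : B * Bᵀ = 1)
    (hS : S.IsDiag) (hSnn : ∀ i, 0 ≤ S i i)
    (hsvd : Uᵀ * Uhat = A * S * Bᵀ) :
    opNorm (Uhat * B * Aᵀ - U) ≤ Real.sqrt 2 * Real.sqrt (1 - (⨅ i, S i i) ^ 2)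
    ∧ Real.sqrt 2 * Real.sqrt (1 - (⨅ i, S i i) ^ 2)
        ≤ Real.sqrt 2 * opNorm (Uhat * Uhatᵀ - U * Uᵀ) :=
  procrustes_alignment_bound_general hr U Uhat A S B hU hUhat hA hA' hB hS hSnn hsvd
end

section
/- Let V₁, …, V_L be matrices with V_ℓ ∈ ℝ^{p×r_ℓ} having orthonormal columns, and set Ṽ = [V₁ V₂ ⋯ V_L] ∈ ℝ^{p×r̃} with r̃ = Σ_ℓ r_ℓ. Suppose there is η_V > 0 such that for every ℓ, (1/(L−1)) Σ_{ℓ'≠ℓ} (1 − ‖V_ℓ^T V_{ℓ'}‖₂) ≥ η_V. Then every eigenvalue of I_{r̃} − (1/L) Ṽ^T Ṽ is at least η_V (L−1)/L. -/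
/-! If `μ` is an eigenvalue of `I - Ṽᵀ Ṽ / L` with eigenvector `v`, then
`λ = L (1 - μ)` is an eigenvalue of the Gram matrix `Ṽᵀ Ṽ`, whose diagonal blocks
are identities and whose off-diagonal blocks are `V_ℓᵀ V_ℓ'`. Reading the
eigen-equation on the block `v_ℓ` of largest norm gives the block Gershgorin bound
  `|λ - 1| ‖v_ℓ‖ ≤ ∑_{ℓ' ≠ ℓ} ‖V_ℓᵀ V_ℓ'‖ ‖v_ℓ'‖ ≤ (∑_{ℓ' ≠ ℓ} ‖V_ℓᵀ V_ℓ'‖) ‖v_ℓ‖`,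
and the heterogeneity hypothesis bounds the last sum by `(L - 1)(1 - η_V)`, so
that `λ ≤ L - (L - 1) η_V`. -/

open Matrix

open Finset

lemma norm_toLp_mulVec_le_opNorm {m n : Type*} [Fintype m] [Fintype n] [DecidableEq n]
    (M : Matrix m n ℝ) (x : n → ℝ) :
    ‖WithLp.toLp 2 (M *ᵥ x)‖ ≤ opNorm M * ‖WithLp.toLp 2 x‖ :=
  (LinearMap.toContinuousLinearMap (Matrix.toEuclideanLin M)).le_opNorm _

lemma Matrix.exists_mulVec_eq_smul_of_mem_spectrum {n : Type*} [Fintype n] [DecidableEq n]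
    {A : Matrix n n ℝ} {μ : ℝ} (hμ : μ ∈ spectrum ℝ A) :
    ∃ v ≠ 0, A *ᵥ v = μ • v := by
  rw [← Matrix.spectrum_toLin', ← Module.End.hasEigenvalue_iff_mem_spectrum] at hμ
  obtain ⟨v, hv, hv0⟩ := hμ.exists_hasEigenvector
  exact ⟨v, hv0, Module.End.mem_eigenspace_iff.1 hv⟩

section BlockGershgorin

variable {ι : Type*} [Fintype ι] {κ : ι → Type*} [∀ i, Fintype (κ i)]

lemma Matrix.sigma_mulVec_apply (G : Matrix (Σ i, κ i) (Σ i, κ i) ℝ)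
    (v : (Σ i, κ i) → ℝ) (i : ι) (a : κ i) :
    (G *ᵥ v) ⟨i, a⟩ =
      ∑ j, (G.submatrix (Sigma.mk i) (Sigma.mk j) *ᵥ fun b => v ⟨j, b⟩) a := by
  simp only [mulVec, dotProduct, submatrix_apply, Fintype.sum_sigma]

variable [DecidableEq ι] [∀ i, DecidableEq (κ i)]

lemma Matrix.smul_block_eq_sum_offDiag {G : Matrix (Σ i, κ i) (Σ i, κ i) ℝ} {c : ι → ℝ}
    (hdiag : ∀ i, G.submatrix (Sigma.mk i) (Sigma.mk i) = c i • 1) {μ : ℝ}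
    {v : (Σ i, κ i) → ℝ} (hv : G *ᵥ v = μ • v) (i : ι) :
    (μ - c i) • (fun a => v ⟨i, a⟩) =
      ∑ j ∈ univ.erase i, G.submatrix (Sigma.mk i) (Sigma.mk j) *ᵥ fun b => v ⟨j, b⟩ := by
  ext a
  have h := G.sigma_mulVec_apply v i a
  rw [hv, ← add_sum_erase _ _ (mem_univ i), hdiag, smul_mulVec, one_mulVec] at h
  simp only [Pi.smul_apply, smul_eq_mul, Finset.sum_apply] at h ⊢
  linarith

theorem Matrix.exists_abs_sub_le_sum_opNorm_offDiag_blocks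
    {G : Matrix (Σ i, κ i) (Σ i, κ i) ℝ} {c : ι → ℝ} (hdiag : ∀ i, G.submatrix (Sigma.mk i) (Sigma.mk i) = c i • 1) {μ : ℝ}
    {v : (Σ i, κ i) → ℝ} (hv0 : v ≠ 0) (hv : G *ᵥ v = μ • v) :
    ∃ i, |μ - c i| ≤ ∑ j ∈ univ.erase i, opNorm (G.submatrix (Sigma.mk i) (Sigma.mk j)) := by
  set N : ι → ℝ := fun i => ‖WithLp.toLp 2 fun a => v ⟨i, a⟩‖
  obtain ⟨q, hq⟩ := Function.ne_iff.1 hv0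
  obtain ⟨i, -, hmax⟩ := exists_max_image univ N ⟨q.1, mem_univ _⟩
  have hNi : 0 < N i := by
    refine lt_of_lt_of_le ?_ (hmax q.1 (mem_univ _))
    refine norm_pos_iff.2 fun h => hq ?_
    simpa using congrFun (congrArg WithLp.ofLp h) q.2
  refine ⟨i, le_of_mul_le_mul_right ?_ hNi⟩
  calc |μ - c i| * N i = ‖WithLp.toLp 2 ((μ - c i) • fun a => v ⟨i, a⟩)‖ := by
        rw [WithLp.toLp_smul, norm_smul, Real.norm_eq_abs]
    _ ≤ ∑ j ∈ univ.erase i, opNorm (G.submatrix (Sigma.mk i) (Sigma.mk j)) * N j := by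
        rw [smul_block_eq_sum_offDiag hdiag hv, WithLp.toLp_sum]
        exact (norm_sum_le _ _).trans (sum_le_sum fun j _ => norm_toLp_mulVec_le_opNorm _ _)
    _ ≤ (∑ j ∈ univ.erase i, opNorm (G.submatrix (Sigma.mk i) (Sigma.mk j))) * N i := by
        rw [sum_mul]
        exact sum_le_sum fun j _ =>
          mul_le_mul_of_nonneg_left (hmax j (mem_univ _)) (norm_nonneg _)

end BlockGershgorin

lemma Matrix.submatrix_sigma_transpose_mul {m ι : Type*} [Fintype m] {κ : ι → Type*}
    [∀ i, Fintype (κ i)] (V : ∀ i, Matrix m (κ i) ℝ) (i j : ι) :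
    ((of fun a (q : Σ i, κ i) => V q.1 a q.2)ᵀ *
        of fun a (q : Σ i, κ i) => V q.1 a q.2).submatrix (Sigma.mk i) (Sigma.mk j) =
      (V i)ᵀ * V j := by
  ext a b
  simp [mul_apply]

theorem eigenvalue_lb_concatenated_gram_general {p L : ℕ} (hL : 2 ≤ L) (r : Fin L → ℕ)
    (V : ∀ ℓ : Fin L, Matrix (Fin p) (Fin (r ℓ)) ℝ)
    (hV : ∀ ℓ, (V ℓ)ᵀ * V ℓ = 1)
    (ηV : ℝ)
    (hhet : ∀ ℓ, ηV ≤ (1 / ((L : ℝ) - 1)) *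
      ∑ ℓ' ∈ Finset.univ.erase ℓ, (1 - opNorm ((V ℓ)ᵀ * V ℓ'))) :
    ∀ μ ∈ spectrum ℝ
      ((1 : Matrix (Σ ℓ : Fin L, Fin (r ℓ)) (Σ ℓ : Fin L, Fin (r ℓ)) ℝ)
        - ((L : ℝ)⁻¹) •
          ((Matrix.of fun i (q : Σ ℓ : Fin L, Fin (r ℓ)) => V q.1 i q.2)ᵀ
            * Matrix.of fun i (q : Σ ℓ : Fin L, Fin (r ℓ)) => V q.1 i q.2)),
      ηV * ((L : ℝ) - 1) / L ≤ μ := by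
  intro μ hμ
  set G := (of fun i (q : Σ ℓ : Fin L, Fin (r ℓ)) => V q.1 i q.2)ᵀ
    * of fun i (q : Σ ℓ : Fin L, Fin (r ℓ)) => V q.1 i q.2
  have hL1 : (1 : ℝ) < L := by exact_mod_cast hL
  obtain ⟨v, hv0, hv⟩ := exists_mulVec_eq_smul_of_mem_spectrum hμ
  have hGv : G *ᵥ v = ((L : ℝ) * (1 - μ)) • v := by
    ext q
    have hq := congrFun hv q
    simp only [sub_mulVec, one_mulVec, smul_mulVec, Pi.sub_apply, Pi.smul_apply,
      smul_eq_mul] at hq ⊢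
    field_simp at hq ⊢
    linarith
  obtain ⟨ℓ, hℓ⟩ := exists_abs_sub_le_sum_opNorm_offDiag_blocks (c := fun _ => 1)
    (fun ℓ => by simp [G, submatrix_sigma_transpose_mul, hV]) hv0 hGv
  simp only [G, submatrix_sigma_transpose_mul] at hℓ
  have hoff : ∑ ℓ' ∈ univ.erase ℓ, opNorm ((V ℓ)ᵀ * V ℓ') ≤ (L - 1) * (1 - ηV) := by
    have hcard : ((univ.erase ℓ).card : ℝ) = L - 1 := by
      rw [card_erase_of_mem (mem_univ _), card_univ, Fintype.card_fin,
        Nat.cast_pred (by omega)]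
    have h := hhet ℓ
    rw [sum_sub_distrib, sum_const, nsmul_eq_mul, mul_one, hcard, one_div, inv_mul_eq_div,
      le_div_iff₀ (by linarith)] at h
    linarith
  rw [div_le_iff₀ (by linarith)]
  linarith [le_abs_self ((L : ℝ) * (1 - μ) - 1)]

/-- If the orthonormal-column matrices V_ℓ have pairwise heterogeneity at least η_V, then
every eigenvalue of I − (1/L) Ṽᵀ Ṽ, where Ṽ = [V₁ ⋯ V_L], is at least η_V (L−1)/L. -/
theorem eigenvalue_lb_concatenated_gram {p L : ℕ} (hL : 2 ≤ L) (r : Fin L → ℕ)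
    (V : ∀ ℓ : Fin L, Matrix (Fin p) (Fin (r ℓ)) ℝ)
    (hV : ∀ ℓ, (V ℓ)ᵀ * V ℓ = 1)
    (ηV : ℝ) (hη : 0 < ηV)
    (hhet : ∀ ℓ, ηV ≤ (1 / ((L : ℝ) - 1)) *
      ∑ ℓ' ∈ Finset.univ.erase ℓ, (1 - opNorm ((V ℓ)ᵀ * V ℓ'))) :
    ∀ μ ∈ spectrum ℝ
      ((1 : Matrix (Σ ℓ : Fin L, Fin (r ℓ)) (Σ ℓ : Fin L, Fin (r ℓ)) ℝ)
        - ((L : ℝ)⁻¹) •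
          ((Matrix.of fun i (q : Σ ℓ : Fin L, Fin (r ℓ)) => V q.1 i q.2)ᵀ
            * Matrix.of fun i (q : Σ ℓ : Fin L, Fin (r ℓ)) => V q.1 i q.2)),
      ηV * ((L : ℝ) - 1) / L ≤ μ :=
  eigenvalue_lb_concatenated_gram_general hL r V hV ηV hhet
end
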